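/- Correctness of the HORNET data transmission phase on the forward path (the 'correctness' property of Camenisch–Lysyanskaya, forward direction): let SV_0, …, SV_{l−1} ∈ {0,1}^k be node-local secrets, s_0, …, s_{l−1} ∈ {0,1}^k keys shared with the source, R_0, …, R_{l−1} routing strings and exp an expiration string with |s_i ‖ R_i ‖ exp| = |FS| for each i, and set FS_i = fs_create(SV_i, s_i, R_i, exp). Let (FS_i, γ_i, β_i), 0 ≤ i ≤ l−1, be the headers produced by the create_ahdr construction from (s_0, …, s_{l−1}) and (FS_0, …, FS_{l−1}). Let M be any bit string and IV ∈ {0,1}^k; set O_l = M, IV_l = IV, and (O_i, IV_i) = add_layer(s_i, IV_{i+1}, O_{i+1}) for i = l−1 down to 0. Then for every 0 ≤ i ≤ l−1: (i) fs_open(SV_i, FS_i) = s_i ‖ R_i ‖ exp, so node i recovers its shared key and routing information; (ii) the MAC verification succeeds: γ_i = MAC(h_MAC(s_i); FS_i ‖ β_i); (iii) if i ≤ l−2, the per-hop header processing yields the next header: (β_i ‖ 0^c) ⊕ PRG2(h_PRG2(s_i)) = FS_{i+1} ‖ γ_{i+1} ‖ β_{i+1}; and (iv) remove_layer(s_i,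 IV_i, O_i) = (O_{i+1}, IV_{i+1}); in particular the destination (node l−1) obtains the original data payload M. -/

import Mathlib

/-- Bit strings: finite sequences of bits. -/
abbrev BS : Type := List Bool

/-- Bitwise XOR of (equal-length) bit strings. -/
def bxor (σ τ : BS) : BS := List.zipWith xor σ τ

/-- Substring from bit position `a` through `b` inclusive (0-indexed). -/
def substr (σ : BS) (a b : ℕ) : BS := (σ.drop a).take (b + 1 - a)

/-- All-zero string of length `a`. -/
def zeros (a : ℕ) : BS := List.replicate a false

/-!
Parts (i), (ii) and (iv) are unfoldings and inverse laws of the primitives. For (iii) write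
`P_j = PRG2 (h_PRG2 s_j)`. The padding satisfies
`φ_{j+1} = (φ_j ⊕ P_j[(r-1-j)c, (r-1)c)) ‖ P_j[(r-1)c, rc)`, and by downward induction from
`β_{l-1} = ρ ‖ φ_{l-1}` every `β_j` ends in `φ_j`: the bits of `P_j` that are XORed onto the tail
of `β_{j+1}` are the ones already hidden in `φ_{j+1}`, so they cancel. Hence `β_{i+1}` ends in the
last block of `P_i`, which is exactly what `(β_i ‖ 0^c) ⊕ P_i` exposes once the XOR with `P_i` has
unmasked the first `(r-1)c` bits.
-/

lemma bxor_length (σ τ : BS) : (bxor σ τ).length = min σ.length τ.length :=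
  List.length_zipWith

lemma bxor_append {σ τ : BS} (σ' τ' : BS) (h : σ.length = τ.length) :
    bxor (σ ++ σ') (τ ++ τ') = bxor σ τ ++ bxor σ' τ' :=
  List.zipWith_append h

lemma bxor_bxor_cancel_right {σ τ : BS} (h : σ.length ≤ τ.length) : bxor (bxor σ τ) τ = σ := by
  apply List.ext_getElem
  · simp [bxor_length, h]
  · intro i _ _
    simp [bxor]

lemma zeros_bxor (n : ℕ) (τ : BS) : bxor (zeros n) τ = τ.take n := by
  apply List.ext_getElem
  · simp [bxor_length, zeros]
  · intro i _ _
    simp [bxor, zeros]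

lemma bxor_take_length_left (σ τ : BS) : bxor (σ.take τ.length) τ = bxor σ τ := by
  apply List.ext_getElem
  · simp only [bxor_length, List.length_take]
    omega
  · intro i _ _
    simp [bxor]

lemma substr_eq_drop {σ : BS} {b : ℕ} (a : ℕ) (h : σ.length ≤ b + 1) : substr σ a b = σ.drop a :=
  List.take_of_length_le (by rw [List.length_drop]; omega)

lemma substr_zero_pred {n : ℕ} (σ : BS) (h : 0 < n) : substr σ 0 (n - 1) = σ.take n := by
  simp [substr, Nat.sub_add_cancel h]

lemma bxor_take_append_of_le {σ τ : BS} (ν : BS) {m n : ℕ} (hnm : n ≤ m)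
    (hτ : τ.length ≤ σ.length + n) : bxor (σ ++ ν.take m) τ = bxor (σ ++ ν.take n) τ := by
  rw [← bxor_take_length_left, ← bxor_take_length_left (σ ++ ν.take n)]
  simp only [List.take_append, List.take_take]
  congr 3
  omega

lemma bxor_append_zeros {φ D : BS} (n : ℕ) (hD : φ.length ≤ D.length) :
    bxor (φ ++ zeros n) D = bxor φ (D.take φ.length) ++ (D.drop φ.length).take n := by
  conv_lhs => rw [← List.take_append_drop φ.length D]
  rw [bxor_append _ _ (by simp [hD]), zeros_bxor]

lemma bxor_append_bxor_cancel {σ τ φ ψ : BS} (hστ : σ.length = τ.length)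
    (hφ : φ.length ≤ ψ.length) : bxor (σ ++ bxor φ ψ) (τ ++ ψ) = bxor σ τ ++ φ := by
  rw [bxor_append _ _ hστ, bxor_bxor_cancel_right hφ]

lemma bxor_bxor_take_append_zeros {σ P : BS} (n : ℕ) (hσ : σ.length ≤ P.length) :
    bxor (bxor σ (P.take σ.length) ++ zeros n) P = σ ++ (P.drop σ.length).take n := by
  have hlen : (bxor σ (P.take σ.length)).length = σ.length := by simp [bxor_length, hσ]
  rw [bxor_append_zeros n (by omega), hlen, bxor_bxor_cancel_right (by simp [hσ])]

section CreateAhdr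

variable {c r l : ℕ} {P H φ β : ℕ → BS}

lemma ahdr_padding_length (hlr : l ≤ r) (hP : ∀ j, (P j).length = r * c) (hφ0 : φ 0 = [])
    (hφ : ∀ j, j + 1 < l → φ (j + 1) = bxor (φ j ++ zeros c) ((P j).drop ((r - 1 - j) * c))) :
    ∀ j, j < l → (φ j).length = j * c
  | 0, _ => by simp [hφ0]
  | j + 1, hj => by
    have hblocks : (r - 1 - j) * c + (j * c + c) = r * c := by
      rw [← add_one_mul, ← add_mul]; congr 1; omega
    rw [hφ j hj, bxor_length, List.length_append, ahdr_padding_length hlr hP hφ0 hφ j (by omega)]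
    simp only [zeros, List.length_replicate, List.length_drop, hP, add_one_mul j c]
    omega

lemma ahdr_padding_succ (hlr : l ≤ r) (hP : ∀ j, (P j).length = r * c) (hφ0 : φ 0 = [])
    (hφ : ∀ j, j + 1 < l → φ (j + 1) = bxor (φ j ++ zeros c) ((P j).drop ((r - 1 - j) * c)))
    {j : ℕ} (hj : j + 1 < l) :
    φ (j + 1) = bxor (φ j) (((P j).drop ((r - 1 - j) * c)).take (j * c)) ++
      (P j).drop ((r - 1) * c) := by
  have hlen := ahdr_padding_length hlr hP hφ0 hφ j (by omega)
  have hblocks : (r - 1 - j) * c + j * c = (r - 1) * c := by rw [← add_mul]; congr 1; omega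
  have hlast : (r - 1) * c + c = r * c := by rw [← add_one_mul]; congr 1; omega
  have hmid : j * c ≤ ((P j).drop ((r - 1 - j) * c)).length := by
    rw [List.length_drop, hP]; omega
  have htail : ((P j).drop ((r - 1) * c)).take c = (P j).drop ((r - 1) * c) :=
    List.take_of_length_le (by rw [List.length_drop, hP]; omega)
  rw [hφ j hj, bxor_append_zeros c (hlen ▸ hmid), hlen, List.drop_drop, hblocks, htail]

lemma ahdr_beta_eq_append_padding (hlr : l ≤ r) (hP : ∀ j, (P j).length = r * c)
    (hH : ∀ j, j < l → (H j).length = c) (hφ0 : φ 0 = [])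
    (hφ : ∀ j, j + 1 < l → φ (j + 1) = bxor (φ j ++ zeros c) ((P j).drop ((r - 1 - j) * c)))
    {ρ : BS} (hρ : ρ.length = (r - l) * c) (hβlast : β (l - 1) = ρ ++ φ (l - 1))
    (hβ : ∀ j, j + 1 < l →
      β j = bxor (H (j + 1) ++ (β (j + 1)).take ((r - 2) * c)) ((P j).take ((r - 1) * c)))
    {j : ℕ} (hj : j < l) : ∃ ρ' : BS, ρ'.length = (r - 1 - j) * c ∧ β j = ρ' ++ φ j := by
  refine Nat.decreasingInduction (n := l - 1)
    (motive := fun j _ => ∃ ρ' : BS, ρ'.length = (r - 1 - j) * c ∧ β j = ρ' ++ φ j)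
    ?_ ⟨ρ, by rw [hρ]; congr 1; omega, hβlast⟩ (by omega)
  rintro k hk ⟨ρ', hρ', hβρ'⟩
  have hk1 : k + 1 < l := by omega
  have hφk := ahdr_padding_length hlr hP hφ0 hφ k (by omega)
  have hprefix : (r - 1 - (k + 1)) * c + k * c = (r - 2) * c := by
    rw [← add_mul]; congr 1; omega
  have hhead : c + (r - 1 - (k + 1)) * c = (r - 1 - k) * c := by
    rw [← one_add_mul]; congr 1; omega
  have hblocks : (r - 1 - k) * c + k * c = (r - 1) * c := by rw [← add_mul]; congr 1; omega
  have hle : (r - 1) * c ≤ r * c := Nat.mul_le_mul_right c (by omega)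
  refine ⟨bxor (H (k + 1) ++ ρ') ((P k).take ((r - 1 - k) * c)), ?_, ?_⟩
  · simp only [bxor_length, List.length_append, List.length_take, hH (k + 1) hk1, hρ', hP]
    omega
  · rw [hβ k hk1, hβρ', ahdr_padding_succ hlr hP hφ0 hφ hk1, ← List.append_assoc ρ',
      List.take_left' (by
        simp only [List.length_append, bxor_length, List.length_take, List.length_drop, hρ', hφk, hP]
        omega), ← hblocks, List.take_add,
      ← List.append_assoc]
    refine bxor_append_bxor_cancel ?_ ?_
    · simp only [List.length_append, List.length_take, hH (k + 1) hk1, hρ', hP]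
      omega
    · simp only [hφk, List.length_take, List.length_drop, hP]
      omega

lemma create_ahdr_next_header (hc : 0 < c) (hlr : l ≤ r) (hP : ∀ j, (P j).length = r * c)
    (hH : ∀ j, j < l → (H j).length = c) (hφ0 : φ 0 = [])
    (hφ : ∀ j, j + 1 < l → φ (j + 1) =
      bxor (φ j ++ zeros c) (substr (P j) ((r - 1 - j) * c) (r * c - 1)))
    {ρ : BS} (hρ : ρ.length = (r - l) * c) (hβlast : β (l - 1) = ρ ++ φ (l - 1))
    (hβ : ∀ j, j + 1 < l → β j =
      bxor (H (j + 1) ++ substr (β (j + 1)) 0 ((r - 2) * c - 1)) (substr (P j) 0 ((r - 1) * c - 1)))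
    {i : ℕ} (hi : i + 1 < l) : bxor (β i ++ zeros c) (P i) = H (i + 1) ++ β (i + 1) := by
  have hblocks : (r - 1) * c = c + (r - 2) * c := by rw [← one_add_mul]; congr 1; omega
  have hlast : (r - 1) * c + c = r * c := by rw [← add_one_mul]; congr 1; omega
  have hφ' : ∀ j, j + 1 < l →
      φ (j + 1) = bxor (φ j ++ zeros c) ((P j).drop ((r - 1 - j) * c)) := by
    intro j hj
    rw [hφ j hj, substr_eq_drop _ (by rw [hP]; omega)]
  have hβ' : ∀ j, j + 1 < l →
      β j = bxor (H (j + 1) ++ (β (j + 1)).take ((r - 2) * c)) ((P j).take ((r - 1) * c)) := by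
    intro j hj
    rw [hβ j hj, substr_zero_pred (P j) (Nat.mul_pos (by omega) hc), substr, List.drop_zero]
    -- For `r = 2` the index `(r - 2) * c - 1` underflows to `0`; `bxor` truncates the excess.
    refine bxor_take_append_of_le _ (by omega) ?_
    simp only [List.length_take, hP, hH (j + 1) hj]
    omega
  obtain ⟨ρ', hρ', hβρ'⟩ := ahdr_beta_eq_append_padding hlr hP hH hφ0 hφ' hρ hβlast hβ' hi
  have hφi := ahdr_padding_length hlr hP hφ0 hφ' i (by omega)
  have hφi1 := ahdr_padding_length hlr hP hφ0 hφ' (i + 1) hi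
  have hprefix : (r - 1 - (i + 1)) * c + i * c = (r - 2) * c := by
    rw [← add_mul]; congr 1; omega
  have hmid : (r - 1 - i) * c + i * c = (r - 1) * c := by rw [← add_mul]; congr 1; omega
  have hsplit : β (i + 1) = (β (i + 1)).take ((r - 2) * c) ++ (P i).drop ((r - 1) * c) := by
    rw [hβρ', ahdr_padding_succ hlr hP hφ0 hφ' hi, ← List.append_assoc,
      List.take_left' (by
        simp only [List.length_append, bxor_length, List.length_take, List.length_drop, hρ', hφi, hP]
        omega)]
  have hX : (H (i + 1) ++ (β (i + 1)).take ((r - 2) * c)).length = (r - 1) * c := by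
    simp only [List.length_append, List.length_take, hH (i + 1) hi, hβρ', hρ', hφi1, add_one_mul]
    omega
  have htail : ((P i).drop ((r - 1) * c)).take c = (P i).drop ((r - 1) * c) :=
    List.take_of_length_le (by rw [List.length_drop, hP]; omega)
  rw [hβ' i hi, ← hX, bxor_bxor_take_append_zeros c (by rw [hX, hP]; omega), hX, htail,
    List.append_assoc, ← hsplit]

end CreateAhdr

theorem hornet_data_transmission_forward_correctness_general
    (k fsl r l : ℕ) (hk : 1 ≤ k) (hlr : l ≤ r)
    (c : ℕ) (hc : c = fsl + k)
    -- header primitives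
    (PRG2 : BS → BS) (hPRG2len : ∀ x, (PRG2 x).length = r * c)
    (MAC : BS → BS → BS) (hMAClen : ∀ key msg, (MAC key msg).length = k)
    (hPRG2 hMAC : BS → BS)
    -- forwarding-segment primitives
    (PRPFS PRPFSinv : BS → BS → BS)
    (hPRPFSlen : ∀ key x, (PRPFS key x).length = x.length)
    (hPRPFSinv : ∀ key x, PRPFSinv key (PRPFS key x) = x)
    (hPRP : BS → BS)
    (fsCreate : BS → BS → BS → BS → BS) (fsOpen : BS → BS → BS)
    (hfsCreate : ∀ SV s R e, fsCreate SV s R e = PRPFS (hPRP SV) (s ++ R ++ e))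
    (hfsOpen : ∀ SV F, fsOpen SV F = PRPFSinv (hPRP SV) F)
    -- payload primitives
    (ENC DEC : BS → BS → BS → BS)
    (hDECENC : ∀ key iv O, DEC key iv (ENC key iv O) = O)
    (PRP PRPinv : BS → BS → BS)
    (hPRPinv : ∀ key iv, PRPinv key (PRP key iv) = iv)
    (hENC : BS → BS)
    (addLayer removeLayer : BS → BS → BS → BS × BS)
    (haddLayer : ∀ s iv O, addLayer s iv O = (ENC (hENC s) iv O, PRP (hPRP s) iv))
    (hremoveLayer : ∀ s iv O, removeLayer s iv O =
      (DEC (hENC s) (PRPinv (hPRP s) iv) O, PRPinv (hPRP s) iv))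
    -- node-local secrets, shared keys, routing strings, expiration
    (SV s R : ℕ → BS) (expt : BS)
    (hlen : ∀ i, i < l → (s i ++ R i ++ expt).length = fsl)
    (FS : ℕ → BS)
    (hFSdef : ∀ i, i < l → FS i = fsCreate (SV i) (s i) (R i) expt)
    -- the create_ahdr construction
    (φ β γ : ℕ → BS)
    (hφ0 : φ 0 = [])
    (hφ : ∀ i, i + 1 < l → φ (i + 1) =
      bxor (φ i ++ zeros c) (substr (PRG2 (hPRG2 (s i))) ((r - 1 - i) * c) (r * c - 1)))
    (ρ : BS) (hρ : ρ.length = (r - l) * c)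
    (hβlast : β (l - 1) = ρ ++ φ (l - 1))
    (hγlast : γ (l - 1) = MAC (hMAC (s (l - 1))) (FS (l - 1) ++ β (l - 1)))
    (hβ : ∀ i, i + 1 < l → β i =
      bxor (FS (i + 1) ++ γ (i + 1) ++ substr (β (i + 1)) 0 ((r - 2) * c - 1))
           (substr (PRG2 (hPRG2 (s i))) 0 ((r - 1) * c - 1)))
    (hγ : ∀ i, i + 1 < l → γ i = MAC (hMAC (s i)) (FS i ++ β i))
    -- the source's onion encryption of the payload
    (O IV : ℕ → BS)
    (hstep : ∀ i, i < l → (O i, IV i) = addLayer (s i) (IV (i + 1)) (O (i + 1))) :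
    ∀ i, i < l →
      (fsOpen (SV i) (FS i) = s i ++ R i ++ expt) ∧
      (γ i = MAC (hMAC (s i)) (FS i ++ β i)) ∧
      (i + 1 < l →
        bxor (β i ++ zeros c) (PRG2 (hPRG2 (s i)))
          = FS (i + 1) ++ γ (i + 1) ++ β (i + 1)) ∧
      (removeLayer (s i) (IV i) (O i) = (O (i + 1), IV (i + 1))) := by
  have hmac : ∀ i, i < l → γ i = MAC (hMAC (s i)) (FS i ++ β i) := by
    intro i hi
    rcases Nat.lt_or_ge (i + 1) l with hnext | hlast
    · exact hγ i hnext
    · obtain rfl : i = l - 1 := by omega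
      exact hγlast
  have hFSγ : ∀ i, i < l → (FS i ++ γ i).length = c := by
    intro i hi
    rw [List.length_append, hFSdef i hi, hfsCreate, hPRPFSlen, hlen i hi, hmac i hi, hMAClen, hc]
  intro i hi
  refine ⟨?_, hmac i hi, ?_, ?_⟩
  · rw [hfsOpen, hFSdef i hi, hfsCreate, hPRPFSinv]
  · exact create_ahdr_next_header (P := fun j => PRG2 (hPRG2 (s j))) (H := fun j => FS j ++ γ j)
      (by omega) hlr (fun _ => hPRG2len _) hFSγ hφ0 hφ hρ hβlast hβ
  · obtain ⟨hO, hIV⟩ := Prod.mk.inj (haddLayer .. ▸ hstep i hi)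
    rw [hremoveLayer, hO, hIV, hPRPinv, hDECENC]

/-- Correctness of the HORNET data transmission phase on the
forward path: for every node `i`, (i) `fs_open` recovers `s i ‖ R i ‖ exp`
from the forwarding segment, (ii) the per-hop MAC verification succeeds,
(iii) per-hop header processing yields the header constructed for node `i+1`,
and (iv) `remove_layer` inverts the source's onion encryption, so the
destination obtains the original payload `M`. -/
theorem hornet_data_transmission_forward_correctness
    (k fsl r l : ℕ) (hk : 1 ≤ k) (hfsl : k ≤ fsl) (hr : 1 ≤ r)
    (hl1 : 1 ≤ l) (hlr : l ≤ r)
    (c : ℕ) (hc : c = fsl + k)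
    -- header primitives
    (PRG2 : BS → BS) (hPRG2len : ∀ x, (PRG2 x).length = r * c)
    (MAC : BS → BS → BS) (hMAClen : ∀ key msg, (MAC key msg).length = k)
    (hPRG2 hMAC : BS → BS)
    (hhPRG2len : ∀ x, (hPRG2 x).length = k) (hhMAClen : ∀ x, (hMAC x).length = k)
    -- forwarding-segment primitives
    (PRPFS PRPFSinv : BS → BS → BS)
    (hPRPFSlen : ∀ key x, (PRPFS key x).length = x.length)
    (hPRPFSinv : ∀ key x, PRPFSinv key (PRPFS key x) = x)
    (hPRP : BS → BS) (hhPRPlen : ∀ x, (hPRP x).length = k)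
    (fsCreate : BS → BS → BS → BS → BS) (fsOpen : BS → BS → BS)
    (hfsCreate : ∀ SV s R e, fsCreate SV s R e = PRPFS (hPRP SV) (s ++ R ++ e))
    (hfsOpen : ∀ SV F, fsOpen SV F = PRPFSinv (hPRP SV) F)
    -- payload primitives
    (ENC DEC : BS → BS → BS → BS)
    (hENClen : ∀ key iv O, (ENC key iv O).length = O.length)
    (hDEClen : ∀ key iv O, (DEC key iv O).length = O.length)
    (hDECENC : ∀ key iv O, DEC key iv (ENC key iv O) = O)
    (PRP PRPinv : BS → BS → BS)
    (hPRPlen : ∀ key iv, (PRP key iv).length = iv.length)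
    (hPRPinv : ∀ key iv, PRPinv key (PRP key iv) = iv)
    (hENC : BS → BS) (hhENClen : ∀ x, (hENC x).length = k)
    (addLayer removeLayer : BS → BS → BS → BS × BS)
    (haddLayer : ∀ s iv O, addLayer s iv O = (ENC (hENC s) iv O, PRP (hPRP s) iv))
    (hremoveLayer : ∀ s iv O, removeLayer s iv O =
      (DEC (hENC s) (PRPinv (hPRP s) iv) O, PRPinv (hPRP s) iv))
    -- node-local secrets, shared keys, routing strings, expiration
    (SV s R : ℕ → BS) (expt : BS)
    (hSV : ∀ i, i < l → (SV i).length = k)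
    (hs : ∀ i, i < l → (s i).length = k)
    (hlen : ∀ i, i < l → (s i ++ R i ++ expt).length = fsl)
    (FS : ℕ → BS)
    (hFSdef : ∀ i, i < l → FS i = fsCreate (SV i) (s i) (R i) expt)
    -- the create_ahdr construction
    (φ β γ : ℕ → BS)
    (hφ0 : φ 0 = [])
    (hφ : ∀ i, i + 1 < l → φ (i + 1) =
      bxor (φ i ++ zeros c) (substr (PRG2 (hPRG2 (s i))) ((r - 1 - i) * c) (r * c - 1)))
    (ρ : BS) (hρ : ρ.length = (r - l) * c)
    (hβlast : β (l - 1) = ρ ++ φ (l - 1))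
    (hγlast : γ (l - 1) = MAC (hMAC (s (l - 1))) (FS (l - 1) ++ β (l - 1)))
    (hβ : ∀ i, i + 1 < l → β i =
      bxor (FS (i + 1) ++ γ (i + 1) ++ substr (β (i + 1)) 0 ((r - 2) * c - 1))
           (substr (PRG2 (hPRG2 (s i))) 0 ((r - 1) * c - 1)))
    (hγ : ∀ i, i + 1 < l → γ i = MAC (hMAC (s i)) (FS i ++ β i))
    -- the source's onion encryption of the payload
    (M IV₀ : BS) (hIV₀ : IV₀.length = k)
    (O IV : ℕ → BS)
    (hOl : O l = M) (hIVl : IV l = IV₀)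
    (hstep : ∀ i, i < l → (O i, IV i) = addLayer (s i) (IV (i + 1)) (O (i + 1))) :
    ∀ i, i < l →
      (fsOpen (SV i) (FS i) = s i ++ R i ++ expt) ∧
      (γ i = MAC (hMAC (s i)) (FS i ++ β i)) ∧
      (i + 1 < l →
        bxor (β i ++ zeros c) (PRG2 (hPRG2 (s i)))
          = FS (i + 1) ++ γ (i + 1) ++ β (i + 1)) ∧
      (removeLayer (s i) (IV i) (O i) = (O (i + 1), IV (i + 1))) :=
  hornet_data_transmission_forward_correctness_general k fsl r l hk hlr c hc PRG2 hPRG2len MAC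
    hMAClen hPRG2 hMAC PRPFS PRPFSinv hPRPFSlen hPRPFSinv hPRP fsCreate fsOpen hfsCreate hfsOpen ENC
    DEC hDECENC PRP PRPinv hPRPinv hENC addLayer removeLayer haddLayer hremoveLayer SV s R expt hlen
    FS hFSdef φ β γ hφ0 hφ ρ hρ hβlast hγlast hβ hγ O IV hstep
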